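/- arXiv:2401.05228 — 7 statements merged into one kernel-verified Lean document; each statement's English description precedes it below -/
import Mathlib

section
/- Let f : Γ → Γ' be a finite morphism of metrised graphs and let d : V(Γ) → ℤ be such that f is harmonic with local degrees d. Define f^* : C₁(Γ',ℝ) → C₁(Γ,ℝ) by (f^*y)(e) = d_e(f)·y(f(e)). Then: (a) f^* maps H₁(Γ',ℝ) into H₁(Γ,ℝ); (b) f^* is adjoint to the pushforward f_* with respect to the intersection length pairings, i.e. ⟨f^*y, x⟩_Γ = ⟨y, f_*x⟩_{Γ'} for all y ∈ H₁(Γ',ℝ) and x ∈ H₁(Γ,ℝ); (c) if y takes integer values on all edges, then so does f^*y. -/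
open Finset

/-- A metrised graph: finite sets of vertices and oriented edges, a source map,
a fixed-point-free involution on edges, and a positive length function invariant
under the involution. -/
structure MetrisedGraph (V E : Type) where
  src : E → V
  inv : E → E
  inv_inv : ∀ e, inv (inv e) = e
  inv_ne : ∀ e, inv e ≠ e
  len : E → ℝ
  len_pos : ∀ e, 0 < len e
  len_inv : ∀ e, len (inv e) = len e

/-- A finite morphism of metrised graphs: maps on vertices and edges commuting with
source and inversion, such that each edge has an integer dilation factor
`degE e = len (onE e) / len e > 0`. -/
structure MetrisedGraph.FiniteMorphism {V E V' E' : Type}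
    (G : MetrisedGraph V E) (G' : MetrisedGraph V' E') where
  onV : V → V'
  onE : E → E'
  src_comm : ∀ e, onV (G.src e) = G'.src (onE e)
  inv_comm : ∀ e, onE (G.inv e) = G'.inv (onE e)
  degE : E → ℤ
  degE_pos : ∀ e, 0 < degE e
  degE_spec : ∀ e, G'.len (onE e) = (degE e : ℝ) * G.len e

/-- A 1-cycle on a metrised graph: an antisymmetric real function on oriented edges
with vanishing boundary at every vertex.  These are exactly the elements of H₁(Γ,ℝ). -/
def MetrisedGraph.IsOneCycle {V E : Type} [Fintype E] [DecidableEq V]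
    (G : MetrisedGraph V E) (x : E → ℝ) : Prop :=
  (∀ e, x (G.inv e) = - x e) ∧
  (∀ v : V, ∑ e ∈ univ.filter (fun e => G.src e = v), x e = 0)

/-- The intersection length pairing `⟨x, y⟩ = (1/2) Σ_e len(e)·x(e)·y(e)` on 1-chains. -/
noncomputable def MetrisedGraph.pairing {V E : Type} [Fintype E]
    (G : MetrisedGraph V E) (x y : E → ℝ) : ℝ :=
  (1/2) * ∑ e : E, G.len e * x e * y e

/-- Pushforward of 1-chains along a finite morphism. -/
noncomputable def MetrisedGraph.FiniteMorphism.pushforward {V E V' E' : Type} [Fintype E] [DecidableEq E']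
    {G : MetrisedGraph V E} {G' : MetrisedGraph V' E'}
    (f : G.FiniteMorphism G') (x : E → ℝ) : E' → ℝ :=
  fun e' => ∑ e ∈ univ.filter (fun e => f.onE e = e'), x e

/-- Pullback of 1-chains along a finite morphism: `(f^* y)(e) = d_e(f) · y(f(e))`. -/
noncomputable def MetrisedGraph.FiniteMorphism.pullback {V E V' E' : Type}
    {G : MetrisedGraph V E} {G' : MetrisedGraph V' E'}
    (f : G.FiniteMorphism G') (y : E' → ℝ) : E → ℝ :=
  fun e => (f.degE e : ℝ) * y (f.onE e)

/-- `f` is harmonic with local degrees `d : V → ℤ`: for every vertex `v` and every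
edge `e'` out of `f(v)`, the sum of `d_e(f)` over edges `e` out of `v` with `f(e) = e'`
equals `d v`. -/
def MetrisedGraph.FiniteMorphism.IsHarmonic {V E V' E' : Type}
    [Fintype E] [DecidableEq V] [DecidableEq E']
    {G : MetrisedGraph V E} {G' : MetrisedGraph V' E'}
    (f : G.FiniteMorphism G') (d : V → ℤ) : Prop :=
  ∀ (v : V) (e' : E'), G'.src e' = f.onV v →
    ∑ e ∈ univ.filter (fun e => G.src e = v ∧ f.onE e = e'), f.degE e = d v

/-- `f` is harmonic of degree `n` with local degrees `d`: harmonic, surjective on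
vertices and on edges, and `Σ_{f(v) = v'} d v = n` for every vertex `v'`. -/
def MetrisedGraph.FiniteMorphism.IsHarmonicOfDegree {V E V' E' : Type}
    [Fintype V] [Fintype E] [DecidableEq V] [DecidableEq V'] [DecidableEq E']
    {G : MetrisedGraph V E} {G' : MetrisedGraph V' E'}
    (f : G.FiniteMorphism G') (d : V → ℤ) (n : ℤ) : Prop :=
  f.IsHarmonic d ∧ Function.Surjective f.onV ∧ Function.Surjective f.onE ∧
    ∀ v' : V', ∑ v ∈ univ.filter (fun v => f.onV v = v'), d v = n

/-!
Harmonicity is exactly what makes the boundary of `f^* y` at a vertex `v` equal to `d v` times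
the boundary of `y` at `f v`, so `f^*` preserves cycles. Since `l(f e) = d_e(f) l(e)`, the
pairing `⟨f^* y, x⟩` is a sum over edges `e` of `l(f e) y(f e) x(e)`, and grouping the edges
by their image gives `⟨y, f_* x⟩`.
-/

namespace MetrisedGraph.FiniteMorphism

variable {V E V' E' : Type} {G : MetrisedGraph V E} {G' : MetrisedGraph V' E'}
  (f : G.FiniteMorphism G')

theorem degE_inv (e : E) : f.degE (G.inv e) = f.degE e := by
  have h := f.degE_spec (G.inv e)
  rw [f.inv_comm, G'.len_inv, G.len_inv, f.degE_spec e] at h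
  exact_mod_cast (mul_right_cancel₀ (G.len_pos e).ne' h).symm

theorem pullback_inv {y : E' → ℝ} (hy : ∀ e', y (G'.inv e') = -y e') (e : E) :
    f.pullback y (G.inv e) = -f.pullback y e := by
  simp only [pullback, f.inv_comm, hy, degE_inv, mul_neg]

theorem sum_pullback_src_eq [Fintype E] [Fintype E'] [DecidableEq V] [DecidableEq V']
    [DecidableEq E'] {d : V → ℤ} (hf : f.IsHarmonic d) (y : E' → ℝ) (v : V) :
    ∑ e ∈ univ.filter (fun e => G.src e = v), f.pullback y e
      = d v * ∑ e' ∈ univ.filter (fun e' => G'.src e' = f.onV v), y e' := by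
  have maps_to : ∀ e ∈ univ.filter (fun e => G.src e = v),
      f.onE e ∈ univ.filter (fun e' => G'.src e' = f.onV v) := by
    intro e he
    simp only [mem_filter, mem_univ, true_and] at he ⊢
    rw [← f.src_comm, he]
  rw [← sum_fiberwise_of_maps_to maps_to, mul_sum]
  refine sum_congr rfl fun e' he' => ?_
  have fiber : ∀ e ∈ (univ.filter (fun e => G.src e = v)).filter (fun e => f.onE e = e'),
      f.pullback y e = f.degE e * y e' := by
    intro e he
    rw [pullback, (mem_filter.1 he).2]
  rw [sum_congr rfl fiber, ← sum_mul, filter_filter]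
  exact congrArg (· * y e') (mod_cast hf v e' (mem_filter.1 he').2)

theorem isOneCycle_pullback [Fintype E] [Fintype E'] [DecidableEq V] [DecidableEq V']
    [DecidableEq E'] {d : V → ℤ} (hf : f.IsHarmonic d) {y : E' → ℝ} (hy : G'.IsOneCycle y) :
    G.IsOneCycle (f.pullback y) :=
  ⟨f.pullback_inv hy.1, fun v => by rw [f.sum_pullback_src_eq hf, hy.2, mul_zero]⟩

theorem pairing_pullback [Fintype E] [Fintype E'] [DecidableEq E'] (y : E' → ℝ) (x : E → ℝ) :
    G.pairing (f.pullback y) x = G'.pairing y (f.pushforward x) := by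
  have len_pullback :
      ∀ e, G.len e * f.pullback y e * x e = G'.len (f.onE e) * y (f.onE e) * x e := by
    intro e
    rw [pullback, f.degE_spec]
    ring
  simp only [pairing, len_pullback, pushforward]
  congr 1
  rw [← sum_fiberwise univ f.onE]
  refine sum_congr rfl fun e' _ => ?_
  rw [mul_sum]
  exact sum_congr rfl fun e he => by rw [(mem_filter.1 he).2]

theorem exists_int_pullback {y : E' → ℝ} (hy : ∀ e', ∃ m : ℤ, y e' = m) (e : E) :
    ∃ m : ℤ, f.pullback y e = m := by
  obtain ⟨m, hm⟩ := hy (f.onE e)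
  exact ⟨f.degE e * m, by rw [pullback, hm, Int.cast_mul]⟩

end MetrisedGraph.FiniteMorphism

theorem pullback_homology_adjoint_integral_general
    {V E V' E' : Type} [Fintype E] [Fintype E']
    [DecidableEq V] [DecidableEq V'] [DecidableEq E']
    (G : MetrisedGraph V E) (G' : MetrisedGraph V' E')
    (f : G.FiniteMorphism G') (d : V → ℤ) (hf : f.IsHarmonic d) :
    (∀ y : E' → ℝ, G'.IsOneCycle y → G.IsOneCycle (f.pullback y)) ∧
    (∀ y : E' → ℝ, ∀ x : E → ℝ, G'.IsOneCycle y → G.IsOneCycle x →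
      G.pairing (f.pullback y) x = G'.pairing y (f.pushforward x)) ∧
    (∀ y : E' → ℝ, (∀ e' : E', ∃ m : ℤ, y e' = m) →
      ∀ e : E, ∃ m : ℤ, f.pullback y e = m) :=
  ⟨fun _ hy => f.isOneCycle_pullback hf hy, fun y x _ _ => f.pairing_pullback y x,
    fun _ hy => f.exists_int_pullback hy⟩

/-- Proposition (pullback formula): if `f : Γ → Γ'` is a finite morphism of metrised
graphs, harmonic with local degrees `d`, then the pullback
`(f^* y)(e) = d_e(f)·y(f(e))` (a) maps H₁(Γ',ℝ) into H₁(Γ,ℝ); (b) is adjoint to the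
pushforward with respect to the intersection length pairings; and (c) preserves
integrality of edge values. -/
theorem pullback_homology_adjoint_integral
    {V E V' E' : Type} [Fintype V] [Fintype E] [Fintype V'] [Fintype E']
    [DecidableEq V] [DecidableEq E] [DecidableEq V'] [DecidableEq E']
    (G : MetrisedGraph V E) (G' : MetrisedGraph V' E')
    (f : G.FiniteMorphism G') (d : V → ℤ) (hf : f.IsHarmonic d) :
    (∀ y : E' → ℝ, G'.IsOneCycle y → G.IsOneCycle (f.pullback y)) ∧
    (∀ y : E' → ℝ, ∀ x : E → ℝ, G'.IsOneCycle y → G.IsOneCycle x →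
      G.pairing (f.pullback y) x = G'.pairing y (f.pushforward x)) ∧
    (∀ y : E' → ℝ, (∀ e' : E', ∃ m : ℤ, y e' = m) →
      ∀ e : E, ∃ m : ℤ, f.pullback y e = m) :=
  pullback_homology_adjoint_integral_general G G' f d hf
end

section
/- Let f : Γ → Γ' be a finite morphism of metrised graphs that is harmonic of degree n with local degrees d : V(Γ) → ℤ. Then for every γ ∈ H₁(Γ,ℝ), the pushforward f_*γ lies in H₁(Γ',ℝ) and satisfies ⟨f_*γ, f_*γ⟩_{Γ'} ≤ n·⟨γ, γ⟩_Γ. In other words, the pushforward on first homology has operator norm at most √n with respect to the intersection length pairings. -/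
open Finset

/-! Since `f` commutes with the source map, pushforward commutes with the boundary and sends
cycles to cycles. Over the fibre of an edge `e'` one has `l(e') = d_e · l(e)`, and harmonicity makes
the local degrees `d_e` of the fibre sum to `n`; Cauchy–Schwarz with weights `d_e` gives
`l(e') (Σ γ(e))² ≤ n Σ l(e) γ(e)²`, and summing over `e'` gives the bound. -/

theorem Finset.mul_sq_sum_le_of_forall_eq_mul {ι : Type*} (s : Finset ι) (w l x : ι → ℝ) {c : ℝ}
    (hc : 0 ≤ c) (hw : ∀ i ∈ s, 0 < w i) (hcwl : ∀ i ∈ s, c = w i * l i) :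
    c * (∑ i ∈ s, x i) ^ 2 ≤ (∑ i ∈ s, w i) * ∑ i ∈ s, l i * x i ^ 2 := by
  have cauchy_schwarz : (∑ i ∈ s, x i) ^ 2 ≤ (∑ i ∈ s, w i) * ∑ i ∈ s, x i ^ 2 / w i :=
    sum_sq_le_sum_mul_sum_of_sq_le_mul s (fun i hi => (hw i hi).le)
      (fun i hi => div_nonneg (sq_nonneg _) (hw i hi).le)
      (fun i hi => (mul_div_cancel₀ _ (hw i hi).ne').ge)
  calc c * (∑ i ∈ s, x i) ^ 2
      ≤ c * ((∑ i ∈ s, w i) * ∑ i ∈ s, x i ^ 2 / w i) :=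
        mul_le_mul_of_nonneg_left cauchy_schwarz hc
    _ = (∑ i ∈ s, w i) * ∑ i ∈ s, c * (x i ^ 2 / w i) := by rw [← mul_sum]; ring
    _ = (∑ i ∈ s, w i) * ∑ i ∈ s, l i * x i ^ 2 := by
      congr 1
      refine sum_congr rfl fun i hi => ?_
      have := (hw i hi).ne'
      rw [hcwl i hi]
      field_simp

namespace MetrisedGraph

namespace FiniteMorphism

variable {V E V' E' : Type} [Fintype E] [DecidableEq E']
  {G : MetrisedGraph V E} {G' : MetrisedGraph V' E'} (f : G.FiniteMorphism G')

theorem pushforward_inv {x : E → ℝ} (hx : ∀ e, x (G.inv e) = -x e) (e' : E') :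
    f.pushforward x (G'.inv e') = -f.pushforward x e' := by
  unfold pushforward
  rw [← sum_neg_distrib]
  refine sum_nbij' G.inv G.inv ?_ ?_ (fun e _ => G.inv_inv e) (fun e _ => G.inv_inv e)
    (fun e _ => by rw [hx, neg_neg])
  · intro e he
    simp only [mem_filter, mem_univ, true_and] at he ⊢
    rw [f.inv_comm, he, G'.inv_inv]
  · intro e he
    simp only [mem_filter, mem_univ, true_and] at he ⊢
    rw [f.inv_comm, he]

theorem sum_pushforward_src_eq [Fintype E'] [DecidableEq V'] (x : E → ℝ) (v' : V') :
    ∑ e' ∈ univ.filter (fun e' => G'.src e' = v'), f.pushforward x e' =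
      ∑ e ∈ univ.filter (fun e => f.onV (G.src e) = v'), x e := by
  unfold pushforward
  rw [← sum_fiberwise_of_maps_to (g := f.onE) (t := univ.filter (fun e' => G'.src e' = v'))]
  · refine sum_congr rfl fun e' he' => sum_congr ?_ fun _ _ => rfl
    simp only [mem_filter, mem_univ, true_and] at he'
    ext e
    simp only [mem_filter, mem_univ, true_and]
    exact ⟨fun h => ⟨by rw [f.src_comm, h, he'], h⟩, And.right⟩
  · intro e he
    simp only [mem_filter, mem_univ, true_and] at he ⊢
    rw [← f.src_comm, he]

theorem sum_degE_fiber_eq [Fintype V] [DecidableEq V] [DecidableEq V'] {d : V → ℤ}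
    (hf : f.IsHarmonic d) (e' : E') :
    ∑ e ∈ univ.filter (fun e => f.onE e = e'), f.degE e =
      ∑ v ∈ univ.filter (fun v => f.onV v = G'.src e'), d v := by
  rw [← sum_fiberwise_of_maps_to (g := G.src) (t := univ.filter (fun v => f.onV v = G'.src e'))]
  · refine sum_congr rfl fun v hv => ?_
    simp only [mem_filter, mem_univ, true_and] at hv
    rw [← hf v e' hv.symm, filter_filter]
    simp only [and_comm]
  · intro e he
    simp only [mem_filter, mem_univ, true_and] at he ⊢
    rw [← he, f.src_comm]

theorem pairing_pushforward_le [Fintype E'] {n : ℝ}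
    (hn : ∀ e', ∑ e ∈ univ.filter (fun e => f.onE e = e'), (f.degE e : ℝ) = n) (x : E → ℝ) :
    G'.pairing (f.pushforward x) (f.pushforward x) ≤ n * G.pairing x x := by
  have fiber_le (e' : E') : G'.len e' * f.pushforward x e' * f.pushforward x e' ≤
      n * ∑ e ∈ univ.filter (fun e => f.onE e = e'), G.len e * x e * x e := by
    simp only [mul_assoc, ← sq, ← hn e']
    refine mul_sq_sum_le_of_forall_eq_mul _ _ _ _ (G'.len_pos e').le
      (fun e _ => by exact_mod_cast f.degE_pos e) fun e he => ?_
    rw [← (mem_filter.mp he).2, f.degE_spec]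
  unfold pairing
  calc (1/2) * ∑ e', G'.len e' * f.pushforward x e' * f.pushforward x e'
      ≤ (1/2) * ∑ e', n * ∑ e ∈ univ.filter (fun e => f.onE e = e'), G.len e * x e * x e :=
        mul_le_mul_of_nonneg_left (sum_le_sum fun e' _ => fiber_le e') (by norm_num)
    _ = n * ((1/2) * ∑ e, G.len e * x e * x e) := by
        rw [← mul_sum, sum_fiberwise univ f.onE]
        ring

end FiniteMorphism

theorem IsOneCycle.pushforward {V E V' E' : Type} [Fintype V] [Fintype E] [Fintype E']
    [DecidableEq V] [DecidableEq V'] [DecidableEq E']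
    {G : MetrisedGraph V E} {G' : MetrisedGraph V' E'} (f : G.FiniteMorphism G') {x : E → ℝ}
    (hx : G.IsOneCycle x) : G'.IsOneCycle (f.pushforward x) := by
  refine ⟨f.pushforward_inv hx.1, fun v' => ?_⟩
  rw [f.sum_pushforward_src_eq, ← sum_fiberwise_of_maps_to (g := G.src)
    (t := univ.filter (fun v => f.onV v = v')) (fun e he => by simpa using he)]
  refine sum_eq_zero fun v hv => ?_
  rw [filter_filter, ← hx.2 v]
  refine sum_congr (filter_congr fun e _ => ?_) fun _ _ => rfl
  exact ⟨And.right, fun h => ⟨h ▸ (mem_filter.mp hv).2, h⟩⟩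

end MetrisedGraph

theorem pushforward_norm_le_general
    {V E V' E' : Type} [Fintype V] [Fintype E] [Fintype E']
    [DecidableEq V] [DecidableEq V'] [DecidableEq E']
    (G : MetrisedGraph V E) (G' : MetrisedGraph V' E')
    (f : G.FiniteMorphism G') (d : V → ℤ) (n : ℤ)
    (hf : f.IsHarmonicOfDegree d n) :
    ∀ γ : E → ℝ, G.IsOneCycle γ →
      G'.IsOneCycle (f.pushforward γ) ∧
      G'.pairing (f.pushforward γ) (f.pushforward γ) ≤ (n : ℝ) * G.pairing γ γ := by
  obtain ⟨hharm, -, -, hdeg⟩ := hf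
  have fiber_degree (e' : E') :
      ∑ e ∈ univ.filter (fun e => f.onE e = e'), (f.degE e : ℝ) = n := by
    exact_mod_cast (f.sum_degE_fiber_eq hharm e').trans (hdeg _)
  exact fun γ hγ => ⟨hγ.pushforward f, f.pairing_pushforward_le fiber_degree γ⟩

/-- If `f : Γ → Γ'` is a finite morphism of metrised graphs, harmonic of degree `n`
with local degrees `d`, then for every `γ ∈ H₁(Γ,ℝ)` the pushforward `f_* γ` lies in
`H₁(Γ',ℝ)` and satisfies `⟨f_*γ, f_*γ⟩ ≤ n·⟨γ, γ⟩`, i.e. the pushforward on first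
homology has operator norm at most `√n`. -/
theorem pushforward_norm_le
    {V E V' E' : Type} [Fintype V] [Fintype E] [Fintype V'] [Fintype E']
    [DecidableEq V] [DecidableEq E] [DecidableEq V'] [DecidableEq E']
    (G : MetrisedGraph V E) (G' : MetrisedGraph V' E')
    (f : G.FiniteMorphism G') (d : V → ℤ) (n : ℤ)
    (hf : f.IsHarmonicOfDegree d n) :
    ∀ γ : E → ℝ, G.IsOneCycle γ →
      G'.IsOneCycle (f.pushforward γ) ∧
      G'.pairing (f.pushforward γ) (f.pushforward γ) ≤ (n : ℝ) * G.pairing γ γ :=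
  pushforward_norm_le_general G G' f d n hf
end

section
/- Let f : Γ → Γ' be a finite morphism of metrised graphs that is harmonic of degree n with local degrees d : V(Γ) → ℤ, and let f^* : C₁(Γ',ℝ) → C₁(Γ,ℝ) be the pullback (f^*y)(e) = d_e(f)·y(f(e)). Then for all γ₁', γ₂' ∈ H₁(Γ',ℝ) one has ⟨f^*γ₁', f^*γ₂'⟩_Γ = n·⟨γ₁', γ₂'⟩_{Γ'}. In particular, f^* has operator norm exactly √n on H₁(Γ',ℝ) with respect to the intersection length pairings. -/
/-!
Since `l(f e) = d_e l(e)`, the term of `e` in `⟨f^*x, f^*y⟩` is `d_e` times the term of `f e`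
in `⟨x, y⟩`. Grouping edges by their image, it remains to see that every edge `e'` has total
multiplicity `Σ_{f e = e'} d_e = n`: splitting the fibre of `e'` by source vertex, harmonicity
turns this into `Σ_{f v = ∂₀ e'} d v`, which is `n`.
-/

open Finset

namespace MetrisedGraph.FiniteMorphism

variable {V E V' E' : Type} {G : MetrisedGraph V E} {G' : MetrisedGraph V' E'}

theorem IsHarmonic.sum_degE_fiber [Fintype V] [Fintype E] [DecidableEq V] [DecidableEq V']
    [DecidableEq E'] {f : G.FiniteMorphism G'} {d : V → ℤ} (hf : f.IsHarmonic d) (e' : E') :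
    ∑ e ∈ univ.filter (fun e => f.onE e = e'), f.degE e =
      ∑ v ∈ univ.filter (fun v => f.onV v = G'.src e'), d v := by
  have src_maps_to : ∀ e ∈ univ.filter (fun e => f.onE e = e'),
      G.src e ∈ univ.filter (fun v => f.onV v = G'.src e') := by
    intro e he
    rw [mem_filter] at he ⊢
    exact ⟨mem_univ _, he.2 ▸ f.src_comm e⟩
  rw [← sum_fiberwise_of_maps_to src_maps_to]
  refine sum_congr rfl fun v hv => ?_
  rw [← hf v e' (mem_filter.1 hv).2.symm, filter_filter]
  exact sum_congr (filter_congr fun _ _ => and_comm) fun _ _ => rfl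

theorem IsHarmonicOfDegree.sum_degE_fiber [Fintype V] [Fintype E] [DecidableEq V]
    [DecidableEq V'] [DecidableEq E'] {f : G.FiniteMorphism G'} {d : V → ℤ} {n : ℤ}
    (hf : f.IsHarmonicOfDegree d n) (e' : E') :
    ∑ e ∈ univ.filter (fun e => f.onE e = e'), f.degE e = n :=
  (hf.1.sum_degE_fiber e').trans (hf.2.2.2 _)

theorem len_mul_pullback_mul_pullback (f : G.FiniteMorphism G') (x y : E' → ℝ) (e : E) :
    G.len e * f.pullback x e * f.pullback y e =
      f.degE e * (G'.len (f.onE e) * x (f.onE e) * y (f.onE e)) := by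
  simp only [pullback, f.degE_spec]
  ring

theorem pairing_pullback_s4 [Fintype E] [Fintype E'] [DecidableEq E'] (f : G.FiniteMorphism G')
    (x y : E' → ℝ) :
    G.pairing (f.pullback x) (f.pullback y) =
      1 / 2 * ∑ e', ((∑ e ∈ univ.filter (fun e => f.onE e = e'), f.degE e : ℤ) : ℝ) *
        (G'.len e' * x e' * y e') := by
  rw [pairing, ← sum_fiberwise univ f.onE]
  congr 1
  refine sum_congr rfl fun e' _ => ?_
  rw [Int.cast_sum, sum_mul]
  refine sum_congr rfl fun e he => ?_
  rw [len_mul_pullback_mul_pullback, (mem_filter.1 he).2]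

end MetrisedGraph.FiniteMorphism

theorem pullback_pairing_eq_general
    {V E V' E' : Type} [Fintype V] [Fintype E] [Fintype E']
    [DecidableEq V] [DecidableEq V'] [DecidableEq E']
    (G : MetrisedGraph V E) (G' : MetrisedGraph V' E')
    (f : G.FiniteMorphism G') (d : V → ℤ) (n : ℤ)
    (hf : f.IsHarmonicOfDegree d n) :
    ∀ γ₁' γ₂' : E' → ℝ, G'.IsOneCycle γ₁' → G'.IsOneCycle γ₂' →
      G.pairing (f.pullback γ₁') (f.pullback γ₂') = (n : ℝ) * G'.pairing γ₁' γ₂' := by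
  intro γ₁' γ₂' _ _
  rw [f.pairing_pullback_s4]
  simp only [hf.sum_degE_fiber, ← mul_sum, MetrisedGraph.pairing]
  ring

/-- If `f : Γ → Γ'` is a finite morphism of metrised graphs, harmonic of degree `n`
with local degrees `d`, then for all `γ₁', γ₂' ∈ H₁(Γ',ℝ)` one has
`⟨f^*γ₁', f^*γ₂'⟩_Γ = n·⟨γ₁', γ₂'⟩_Γ'`; in particular the pullback has operator norm
exactly `√n` on `H₁(Γ',ℝ)`. -/
theorem pullback_pairing_eq
    {V E V' E' : Type} [Fintype V] [Fintype E] [Fintype V'] [Fintype E']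
    [DecidableEq V] [DecidableEq E] [DecidableEq V'] [DecidableEq E']
    (G : MetrisedGraph V E) (G' : MetrisedGraph V' E')
    (f : G.FiniteMorphism G') (d : V → ℤ) (n : ℤ)
    (hf : f.IsHarmonicOfDegree d n) :
    ∀ γ₁' γ₂' : E' → ℝ, G'.IsOneCycle γ₁' → G'.IsOneCycle γ₂' →
      G.pairing (f.pullback γ₁') (f.pullback γ₂') = (n : ℝ) * G'.pairing γ₁' γ₂' :=
  pullback_pairing_eq_general G G' f d n hf
end

section
/- Let m be a natural number, λ : Fin m → ℂ, let C > 0 and d₁, d₂ > 0 be real numbers, and suppose that for every natural number n ≥ 1 the real part of Σᵢ (λ i)ⁿ is at most C·(d₁ⁿ + d₂ⁿ). Then |λ i| ≤ max(d₁, d₂) for every i. -/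
/-!
Write `λ = ‖λ‖ · u` with `u` on the unit circle. In the compact group `Circleᵐ` the powers of
`(u₁, …, uₘ)` return to every neighbourhood of `1`, so for infinitely many `n` every `Re uᵢⁿ`
exceeds `1/2`. For those `n` each term of the power sum has real part at least `‖λᵢ‖ⁿ / 2 ≥ 0`,
whence `‖λⱼ‖ⁿ ≤ 4 |C| max(d₁, d₂)ⁿ` infinitely often, which forces `‖λⱼ‖ ≤ max(d₁, d₂)`.
-/

open Complex Filter Topology

theorem re_pow_eq_norm_pow_mul_re_exp_arg_pow (z : ℂ) (n : ℕ) :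
    (z ^ n).re = ‖z‖ ^ n * ((Circle.exp (arg z) ^ n : Circle) : ℂ).re := by
  conv_lhs => rw [← norm_mul_exp_arg_mul_I z]
  rw [mul_pow, ← ofReal_pow, re_ofReal_mul, Circle.coe_pow, Circle.coe_exp]

theorem frequently_forall_lt_re_pow {ι : Type*} [Finite ι] (u : ι → Circle) {c : ℝ}
    (hc : c < 1) : ∃ᶠ n in atTop, ∀ i, c < ((u i ^ n : Circle) : ℂ).re := by
  have hU : ∀ᶠ w : ι → Circle in 𝓝 1, ∀ i, c < (w i : ℂ).re := by
    refine eventually_all.2 fun i => ?_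
    have : Continuous fun w : ι → Circle => (w i : ℂ).re := by fun_prop
    exact this.continuousAt.eventually (lt_mem_nhds (by simpa using hc))
  exact (mapClusterPt_one_atTop_pow u).frequently hU

theorem frequently_forall_mul_norm_pow_le_re_pow {ι : Type*} [Finite ι] (z : ι → ℂ) {c : ℝ}
    (hc : c < 1) : ∃ᶠ n in atTop, ∀ i, c * ‖z i‖ ^ n ≤ (z i ^ n).re := by
  refine (frequently_forall_lt_re_pow (fun i => Circle.exp (arg (z i))) hc).mono
    fun n hn i => ?_
  rw [re_pow_eq_norm_pow_mul_re_exp_arg_pow, mul_comm c]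
  exact mul_le_mul_of_nonneg_left (hn i).le (by positivity)

theorem frequently_forall_norm_pow_le_two_mul_re_sum_pow {ι : Type*} [Fintype ι] (z : ι → ℂ) :
    ∃ᶠ n in atTop, ∀ j, ‖z j‖ ^ n ≤ 2 * (∑ i, z i ^ n).re := by
  refine (frequently_forall_mul_norm_pow_le_re_pow z one_half_lt_one).mono fun n hn j => ?_
  have hnonneg : ∀ i, 0 ≤ (z i ^ n).re := fun i => le_trans (by positivity) (hn i)
  calc ‖z j‖ ^ n = 2 * (1 / 2 * ‖z j‖ ^ n) := by ring
    _ ≤ 2 * (z j ^ n).re := by gcongr; exact hn j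
    _ ≤ 2 * (∑ i, z i ^ n).re := by
      rw [re_sum]
      gcongr
      exact Finset.single_le_sum (fun i _ => hnonneg i) (Finset.mem_univ j)

theorem le_of_frequently_pow_le_mul_pow {r D K : ℝ} (hD : 0 < D)
    (h : ∃ᶠ n in atTop, r ^ n ≤ K * D ^ n) : r ≤ D := by
  by_contra! hDr
  have hgrowth : ∀ᶠ n in atTop, K < (r / D) ^ n :=
    (tendsto_pow_atTop_atTop_of_one_lt ((one_lt_div hD).2 hDr)).eventually_gt_atTop K
  obtain ⟨n, hle, hlt⟩ := (h.and_eventually hgrowth).exists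
  rw [div_pow, lt_div_iff₀ (pow_pos hD n)] at hlt
  exact hle.not_gt hlt

theorem abs_le_max_of_re_powerSum_le_general
    (m : ℕ) (lam : Fin m → ℂ) (C d₁ d₂ : ℝ)
    (hd₁ : 0 < d₁) (hd₂ : 0 < d₂)
    (h : ∀ n : ℕ, 1 ≤ n → (∑ i, lam i ^ n).re ≤ C * (d₁ ^ n + d₂ ^ n)) :
    ∀ i, ‖lam i‖ ≤ max d₁ d₂ := by
  intro j
  refine le_of_frequently_pow_le_mul_pow (K := 4 * |C|) (lt_max_of_lt_left hd₁) ?_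
  refine ((frequently_forall_norm_pow_le_two_mul_re_sum_pow lam).and_eventually
    (eventually_ge_atTop 1)).mono fun n ⟨hn, hn1⟩ => ?_
  have hd : d₁ ^ n + d₂ ^ n ≤ 2 * max d₁ d₂ ^ n := by
    have := pow_le_pow_left₀ hd₁.le (le_max_left d₁ d₂) n
    have := pow_le_pow_left₀ hd₂.le (le_max_right d₁ d₂) n
    linarith
  calc ‖lam j‖ ^ n ≤ 2 * (∑ i, lam i ^ n).re := hn j
    _ ≤ 2 * (C * (d₁ ^ n + d₂ ^ n)) := by gcongr; exact h n hn1
    _ ≤ 2 * (|C| * (2 * max d₁ d₂ ^ n)) := by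
      gcongr
      exact le_abs_self C
    _ = 4 * |C| * max d₁ d₂ ^ n := by ring

/-- Analytic core of the trace bound: if the real parts of the power sums of complex
numbers `λ₁, …, λ_m` are bounded by `C·(d₁ⁿ + d₂ⁿ)` for all `n ≥ 1`, then every
`|λ i|` is at most `max d₁ d₂`. -/
theorem abs_le_max_of_re_powerSum_le
    (m : ℕ) (lam : Fin m → ℂ) (C d₁ d₂ : ℝ)
    (hC : 0 < C) (hd₁ : 0 < d₁) (hd₂ : 0 < d₂)
    (h : ∀ n : ℕ, 1 ≤ n → (∑ i, lam i ^ n).re ≤ C * (d₁ ^ n + d₂ ^ n)) :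
    ∀ i, ‖lam i‖ ≤ max d₁ d₂ :=
  abs_le_max_of_re_powerSum_le_general m lam C d₁ d₂ hd₁ hd₂ h
end

section
/- Let K be a field equipped with a valuation v : K → ℝ ∪ {∞}, let v₂ ≤ v₁ be real numbers, and let a : ℤ → K be a Laurent coefficient sequence on the closed annulus with parameters (v₁, v₂). Then the following are equivalent: (i) a admits a decomposition, i.e. there exist c ∈ K with c ≠ 0, d ∈ ℤ, and a Laurent coefficient sequence g : ℤ → K with v(g_i) + v_k·i > 0 for all i ∈ ℤ and k ∈ {1,2}, such that a_i = c·g_{i−d} for all i ≠ d and a_d = c·(1 + g₀); (ii) for each k ∈ {1,2} there exists an index i_k ∈ ℤ with v(a_{i_k}) + v_k·i_k < v(a_i) + v_k·i for all i ≠ i_k, and moreover i₁ = i₂. Furthermore, when these hold, the decomposition satisfies d = i₁ and c = a_d. -/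
/-- A (rank-one) valuation on a field `K`, valued in `ℝ ∪ {∞}`:
`v x = ∞ ↔ x = 0`, `v (xy) = v x + v y`, and `v (x+y) ≥ min (v x) (v y)`. -/
def IsValuation {K : Type*} [Field K] (v : K → WithTop ℝ) : Prop :=
  (∀ x : K, v x = ⊤ ↔ x = 0) ∧
  (∀ x y : K, v (x * y) = v x + v y) ∧
  (∀ x y : K, min (v x) (v y) ≤ v (x + y))

/-- `a : ℤ → K` is the Laurent coefficient sequence of a rigid analytic function on the
closed annulus with parameters `(v₁, v₂)`: `v(aᵢ) + v₁·i → ∞` as `i → −∞` and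
`v(aᵢ) + v₂·i → ∞` as `i → +∞`. -/
def IsLaurentSeq {K : Type*} [Field K] (v : K → WithTop ℝ) (v₁ v₂ : ℝ) (a : ℤ → K) : Prop :=
  (∀ B : ℝ, ∃ N : ℤ, ∀ i : ℤ, i ≤ N → (B : WithTop ℝ) < v (a i) + ((v₁ * i : ℝ) : WithTop ℝ)) ∧
  (∀ B : ℝ, ∃ N : ℤ, ∀ i : ℤ, N ≤ i → (B : WithTop ℝ) < v (a i) + ((v₂ * i : ℝ) : WithTop ℝ))

/-- A decomposition `(c, d, g)` of a Laurent coefficient sequence `a`, expressing the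
factorisation `h(t) = c·t^d·(1 + g(t))` where `g` has positive valuation at the Gauss
points of both bounding discs. -/
def IsDecomposition {K : Type*} [Field K] (v : K → WithTop ℝ) (v₁ v₂ : ℝ)
    (a : ℤ → K) (c : K) (d : ℤ) (g : ℤ → K) : Prop :=
  c ≠ 0 ∧ IsLaurentSeq v v₁ v₂ g ∧
  (∀ i : ℤ, (0 : WithTop ℝ) < v (g i) + ((v₁ * i : ℝ) : WithTop ℝ)) ∧
  (∀ i : ℤ, (0 : WithTop ℝ) < v (g i) + ((v₂ * i : ℝ) : WithTop ℝ)) ∧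
  (∀ i : ℤ, i ≠ d → a i = c * g (i - d)) ∧
  a d = c * (1 + g 0)

/-!
Write `wₖ(a)ᵢ = v(aᵢ) + vₖ·i`. If `aᵢ₊d = c·gᵢ` for `i ≠ 0`, then
`wₖ(a)ᵢ₊d = (v(c) + vₖ·d) + wₖ(g)ᵢ`, so `wₖ(g)` is positive away from `0` exactly when `wₖ(a)`
exceeds `v(c) + vₖ·d` away from `d`. In a decomposition `v(a_d) = v(c)` because `v(g₀) > 0`, so
`d` is the strict minimum of both `w₁(a)` and `w₂(a)`. Conversely, a common strict minimum `d`
gives the decomposition with `c = a_d` and `gᵢ = aᵢ₊d / a_d` for `i ≠ 0`, `g₀ = 0`; the same shift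
transports the growth conditions from `a` to `g`. Strict minima are unique, which pins down `d`.
-/

open Filter

def IsStrictMinAt {ι α : Type*} [LT α] (f : ι → α) (i₀ : ι) : Prop :=
  ∀ i, i ≠ i₀ → f i₀ < f i

theorem IsStrictMinAt.eq {ι α : Type*} [Preorder α] {f : ι → α} {i j : ι}
    (hi : IsStrictMinAt f i) (hj : IsStrictMinAt f j) : i = j := by
  by_contra hij
  exact lt_asymm (hi j (Ne.symm hij)) (hj i hij)

section

variable {K : Type*} [Field K] {v : K → WithTop ℝ}

namespace IsValuation

theorem map_zero (hv : IsValuation v) : v 0 = ⊤ :=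
  (hv.1 0).2 rfl

theorem ne_top (hv : IsValuation v) {x : K} (hx : x ≠ 0) : v x ≠ ⊤ :=
  fun h => hx ((hv.1 x).1 h)

theorem map_mul (hv : IsValuation v) (x y : K) : v (x * y) = v x + v y :=
  hv.2.1 x y

theorem map_one (hv : IsValuation v) : v 1 = 0 := by
  have h := hv.map_mul 1 1
  rw [one_mul] at h
  lift v 1 to ℝ using hv.ne_top one_ne_zero with r
  have : r = r + r := by exact_mod_cast h
  exact_mod_cast (by linarith : r = 0)

noncomputable def toAddValuation (hv : IsValuation v) : AddValuation K (WithTop ℝ) :=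
  AddValuation.of v hv.map_zero hv.map_one hv.2.2 hv.map_mul

theorem map_one_add_of_pos (hv : IsValuation v) {y : K} (hy : 0 < v y) : v (1 + y) = 0 := by
  have h := hv.toAddValuation.map_add_eq_of_lt_left (x := 1) (y := y)
  simp only [toAddValuation, AddValuation.of_apply, hv.map_one] at h
  exact h hy

end IsValuation

def weightedVal (v : K → WithTop ℝ) (w : ℝ) (a : ℤ → K) (i : ℤ) : WithTop ℝ :=
  v (a i) + ((w * i : ℝ) : WithTop ℝ)

theorem isLaurentSeq_iff {v₁ v₂ : ℝ} {a : ℤ → K} :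
    IsLaurentSeq v v₁ v₂ a ↔
      (∀ B : ℝ, ∀ᶠ i in atBot, (B : WithTop ℝ) < weightedVal v v₁ a i) ∧
      (∀ B : ℝ, ∀ᶠ i in atTop, (B : WithTop ℝ) < weightedVal v v₂ a i) := by
  simp only [eventually_atBot, eventually_atTop]
  rfl

theorem weightedVal_eq_top_of_eq_zero (hv : IsValuation v) {w : ℝ} {a : ℤ → K} {i : ℤ}
    (hi : a i = 0) : weightedVal v w a i = ⊤ := by
  rw [weightedVal, hi, hv.map_zero, WithTop.top_add]

theorem IsStrictMinAt.ne_zero (hv : IsValuation v) {w : ℝ} {a : ℤ → K} {d : ℤ}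
    (hmin : IsStrictMinAt (weightedVal v w a) d) : a d ≠ 0 := fun hd =>
  not_top_lt (weightedVal_eq_top_of_eq_zero hv hd ▸ hmin (d + 1) (by omega))

section Shift

variable {w : ℝ} {a g : ℤ → K} {c : K} {d j : ℤ}

theorem weightedVal_add_of_eq_mul (hv : IsValuation v) (h : a (j + d) = c * g j) :
    weightedVal v w a (j + d) = v c + ((w * d : ℝ) : WithTop ℝ) + weightedVal v w g j := by
  rw [weightedVal, weightedVal, h, hv.map_mul, Int.cast_add, mul_add, WithTop.coe_add]
  ac_rfl

theorem lt_weightedVal_iff_of_eq_mul (hv : IsValuation v) (hc : c ≠ 0)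
    (h : a (j + d) = c * g j) (x : WithTop ℝ) :
    x < weightedVal v w g j ↔ v c + ((w * d : ℝ) : WithTop ℝ) + x < weightedVal v w a (j + d) := by
  rw [weightedVal_add_of_eq_mul hv h,
    WithTop.add_lt_add_iff_left (WithTop.add_ne_top.2 ⟨hv.ne_top hc, WithTop.coe_ne_top⟩)]

end Shift

theorem isStrictMinAt_of_eq_mul_one_add (hv : IsValuation v) {w : ℝ} {a g : ℤ → K} {c : K}
    {d : ℤ} (hc : c ≠ 0) (hshift : ∀ i, i ≠ d → a i = c * g (i - d))
    (hd : a d = c * (1 + g 0)) (hg : ∀ i, 0 < weightedVal v w g i) :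
    IsStrictMinAt (weightedVal v w a) d := by
  have hmin : weightedVal v w a d = v c + ((w * d : ℝ) : WithTop ℝ) := by
    have hg0 : 0 < v (g 0) := by simpa [weightedVal] using hg 0
    rw [weightedVal, hd, hv.map_mul, hv.map_one_add_of_pos hg0, add_zero]
  intro i hi
  obtain ⟨j, rfl⟩ : ∃ j, i = j + d := ⟨i - d, by ring⟩
  have hj : a (j + d) = c * g j := by simpa using hshift _ hi
  simpa only [add_zero, ← hmin] using (lt_weightedVal_iff_of_eq_mul hv hc hj 0).1 (hg j)

/-- The `g` of the decomposition of `a` with `c = a d`. -/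
noncomputable def canonicalTail (a : ℤ → K) (d : ℤ) : ℤ → K :=
  Function.update (fun i => (a d)⁻¹ * a (i + d)) 0 0

section CanonicalTail

variable {w : ℝ} {a : ℤ → K} {d : ℤ}

theorem canonicalTail_zero : canonicalTail a d 0 = 0 :=
  Function.update_self ..

theorem eq_mul_canonicalTail (had : a d ≠ 0) {j : ℤ} (hj : j ≠ 0) :
    a (j + d) = a d * canonicalTail a d j := by
  rw [canonicalTail, Function.update_of_ne hj, mul_inv_cancel_left₀ had]

theorem weightedVal_canonicalTail_zero (hv : IsValuation v) :
    weightedVal v w (canonicalTail a d) 0 = ⊤ :=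
  weightedVal_eq_top_of_eq_zero hv canonicalTail_zero

theorem weightedVal_canonicalTail_pos (hv : IsValuation v)
    (hmin : IsStrictMinAt (weightedVal v w a) d) (j : ℤ) :
    0 < weightedVal v w (canonicalTail a d) j := by
  rcases eq_or_ne j 0 with rfl | hj
  · rw [weightedVal_canonicalTail_zero hv]
    exact WithTop.coe_lt_top 0
  have had := hmin.ne_zero hv
  rw [lt_weightedVal_iff_of_eq_mul hv had (eq_mul_canonicalTail had hj), add_zero]
  exact hmin (j + d) (by omega)

theorem eventually_lt_weightedVal_canonicalTail (hv : IsValuation v) (had : a d ≠ 0)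
    {l : Filter ℤ} (hl : Tendsto (· + d) l l)
    (ha : ∀ B : ℝ, ∀ᶠ i in l, (B : WithTop ℝ) < weightedVal v w a i) (B : ℝ) :
    ∀ᶠ j in l, (B : WithTop ℝ) < weightedVal v w (canonicalTail a d) j := by
  lift v (a d) + ((w * d : ℝ) : WithTop ℝ) to ℝ
    using WithTop.add_ne_top.2 ⟨hv.ne_top had, WithTop.coe_ne_top⟩ with r hr
  filter_upwards [hl.eventually (ha (r + B))] with j hj
  rcases eq_or_ne j 0 with rfl | hj0
  · rw [weightedVal_canonicalTail_zero hv]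
    exact WithTop.coe_lt_top B
  rw [lt_weightedVal_iff_of_eq_mul hv had (eq_mul_canonicalTail had hj0), ← hr]
  exact_mod_cast hj

theorem isDecomposition_canonicalTail (hv : IsValuation v) {v₁ v₂ : ℝ}
    (ha : IsLaurentSeq v v₁ v₂ a) (h₁ : IsStrictMinAt (weightedVal v v₁ a) d)
    (h₂ : IsStrictMinAt (weightedVal v v₂ a) d) :
    IsDecomposition v v₁ v₂ a (a d) d (canonicalTail a d) := by
  have had := h₁.ne_zero hv
  obtain ⟨ha₁, ha₂⟩ := isLaurentSeq_iff.1 ha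
  refine ⟨had, isLaurentSeq_iff.2 ⟨?_, ?_⟩, weightedVal_canonicalTail_pos hv h₁,
    weightedVal_canonicalTail_pos hv h₂, fun i hi => ?_, ?_⟩
  · exact eventually_lt_weightedVal_canonicalTail hv had
      (tendsto_atBot_add_const_right _ d tendsto_id) ha₁
  · exact eventually_lt_weightedVal_canonicalTail hv had
      (tendsto_atTop_add_const_right _ d tendsto_id) ha₂
  · rw [← eq_mul_canonicalTail had (sub_ne_zero.2 hi), sub_add_cancel]
  · rw [canonicalTail_zero, add_zero, mul_one]

end CanonicalTail

end

theorem decomposition_iff_strict_min_general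
    {K : Type*} [Field K] (v : K → WithTop ℝ) (hv : IsValuation v)
    (v₁ v₂ : ℝ) (a : ℤ → K) (ha : IsLaurentSeq v v₁ v₂ a) :
    ((∃ c d g, IsDecomposition v v₁ v₂ a c d g) ↔
      (∃ i₀ : ℤ,
        (∀ i : ℤ, i ≠ i₀ →
          v (a i₀) + ((v₁ * i₀ : ℝ) : WithTop ℝ) < v (a i) + ((v₁ * i : ℝ) : WithTop ℝ)) ∧
        (∀ i : ℤ, i ≠ i₀ →
          v (a i₀) + ((v₂ * i₀ : ℝ) : WithTop ℝ) < v (a i) + ((v₂ * i : ℝ) : WithTop ℝ)))) ∧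
    (∀ c d g, IsDecomposition v v₁ v₂ a c d g →
      ∀ i₀ : ℤ,
        (∀ i : ℤ, i ≠ i₀ →
          v (a i₀) + ((v₁ * i₀ : ℝ) : WithTop ℝ) < v (a i) + ((v₁ * i : ℝ) : WithTop ℝ)) →
        (∀ i : ℤ, i ≠ i₀ →
          v (a i₀) + ((v₂ * i₀ : ℝ) : WithTop ℝ) < v (a i) + ((v₂ * i : ℝ) : WithTop ℝ)) →
        d = i₀) ∧
    (∀ i₀ : ℤ,
      (∀ i : ℤ, i ≠ i₀ →
        v (a i₀) + ((v₁ * i₀ : ℝ) : WithTop ℝ) < v (a i) + ((v₁ * i : ℝ) : WithTop ℝ)) →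
      (∀ i : ℤ, i ≠ i₀ →
        v (a i₀) + ((v₂ * i₀ : ℝ) : WithTop ℝ) < v (a i) + ((v₂ * i : ℝ) : WithTop ℝ)) →
      ∃ g, IsDecomposition v v₁ v₂ a (a i₀) i₀ g) := by
  have isStrictMinAt_of_decomposition {c d g} (hd : IsDecomposition v v₁ v₂ a c d g) :
      IsStrictMinAt (weightedVal v v₁ a) d ∧ IsStrictMinAt (weightedVal v v₂ a) d := by
    obtain ⟨hc, -, hg₁, hg₂, hshift, had⟩ := hd
    exact ⟨isStrictMinAt_of_eq_mul_one_add hv hc hshift had hg₁,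
      isStrictMinAt_of_eq_mul_one_add hv hc hshift had hg₂⟩
  refine ⟨⟨fun ⟨c, d, g, hd⟩ => ⟨d, isStrictMinAt_of_decomposition hd⟩,
    fun ⟨i₀, h₁, h₂⟩ => ⟨a i₀, i₀, _, isDecomposition_canonicalTail hv ha h₁ h₂⟩⟩,
    fun c d g hd i₀ h₁ _ => (isStrictMinAt_of_decomposition hd).1.eq h₁,
    fun i₀ h₁ h₂ => ⟨_, isDecomposition_canonicalTail hv ha h₁ h₂⟩⟩

/-- Characterisation of units on a closed annulus in terms of Newton polygons:
a Laurent coefficient sequence `a` admits a decomposition `h = c·t^d·(1+g)` iff for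
`k = 1, 2` the quantity `v(aᵢ) + v_k·i` attains a strict minimum at a unique index
`i_k`, with `i₁ = i₂`.  Moreover, in that case `d = i₁` in any decomposition, and one
may take `c = a_d`. -/
theorem decomposition_iff_strict_min
    {K : Type*} [Field K] (v : K → WithTop ℝ) (hv : IsValuation v)
    (v₁ v₂ : ℝ) (h12 : v₂ ≤ v₁) (a : ℤ → K) (ha : IsLaurentSeq v v₁ v₂ a) :
    ((∃ c d g, IsDecomposition v v₁ v₂ a c d g) ↔
      (∃ i₀ : ℤ,
        (∀ i : ℤ, i ≠ i₀ →
          v (a i₀) + ((v₁ * i₀ : ℝ) : WithTop ℝ) < v (a i) + ((v₁ * i : ℝ) : WithTop ℝ)) ∧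
        (∀ i : ℤ, i ≠ i₀ →
          v (a i₀) + ((v₂ * i₀ : ℝ) : WithTop ℝ) < v (a i) + ((v₂ * i : ℝ) : WithTop ℝ)))) ∧
    (∀ c d g, IsDecomposition v v₁ v₂ a c d g →
      ∀ i₀ : ℤ,
        (∀ i : ℤ, i ≠ i₀ →
          v (a i₀) + ((v₁ * i₀ : ℝ) : WithTop ℝ) < v (a i) + ((v₁ * i : ℝ) : WithTop ℝ)) →
        (∀ i : ℤ, i ≠ i₀ →
          v (a i₀) + ((v₂ * i₀ : ℝ) : WithTop ℝ) < v (a i) + ((v₂ * i : ℝ) : WithTop ℝ)) →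
        d = i₀) ∧
    (∀ i₀ : ℤ,
      (∀ i : ℤ, i ≠ i₀ →
        v (a i₀) + ((v₁ * i₀ : ℝ) : WithTop ℝ) < v (a i) + ((v₁ * i : ℝ) : WithTop ℝ)) →
      (∀ i : ℤ, i ≠ i₀ →
        v (a i₀) + ((v₂ * i₀ : ℝ) : WithTop ℝ) < v (a i) + ((v₂ * i : ℝ) : WithTop ℝ)) →
      ∃ g, IsDecomposition v v₁ v₂ a (a i₀) i₀ g) :=
  decomposition_iff_strict_min_general v hv v₁ v₂ a ha
end

section
/- Let K be a complete nonarchimedean normed field of characteristic zero whose norm satisfies ‖2‖ = 1, and for i ∈ ℕ let binom(−1/2, i) ∈ ℚ denote the generalized binomial coefficient (∏_{j=0}^{i−1}(−1/2 − j))/i!, regarded as an element of K via the canonical embedding of ℚ. Then for every x ∈ K with ‖x‖ < 1, the series Σ_{i≥0} binom(−1/2, i)·xⁱ converges to an element y ∈ K satisfying y²·(1 + x) = 1, and for every k ∈ ℕ the truncation error satisfies ‖y − Σ_{i=0}^{k} binom(−1/2, i)·xⁱ‖ ≤ ‖x‖^{k+1}. -/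
/-!
`binom(-1/2, i)` is `Ring.choose (-1/2) i`, so Chu–Vandermonde gives
`∑_{a+b=n} binom(-1/2, a) binom(-1/2, b) = binom(-1, n) = (-1)ⁿ`: the Cauchy square of the
series is the geometric series of `(1 + x)⁻¹`. Since `(-4)ⁱ binom(-1/2, i)` is the central binomial
coefficient, an integer, `‖binom(-1/2, i)‖ ≤ 1` as soon as `‖2‖ = 1`. The terms are then bounded
by `‖x‖ⁱ`, which gives convergence, and by the ultrametric inequality the tail after `xᵏ` is
bounded by `‖x‖^(k+1)`.
-/

/-- The generalized binomial coefficient `binom(-1/2, i)` as a rational number. -/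
def binomHalf (i : ℕ) : ℚ :=
  (∏ j ∈ Finset.range i, (-(1 : ℚ)/2 - j)) / (Nat.factorial i)

open Finset Polynomial

lemma binomHalf_eq_choose (i : ℕ) : binomHalf i = Ring.choose (-1 / 2 : ℚ) i := by
  rw [Ring.choose_eq_smul, ← aeval_eq_smeval, aeval_def, eval₂_eq_eval_map, descPochhammer_map,
    descPochhammer_eval_eq_prod_range, binomHalf, smul_eq_mul, div_eq_inv_mul, neg_div]

lemma sum_antidiagonal_binomHalf_mul (n : ℕ) :
    ∑ p ∈ antidiagonal n, binomHalf p.1 * binomHalf p.2 = (-1) ^ n := by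
  simp only [binomHalf_eq_choose]
  rw [← Ring.add_choose_eq n (Commute.refl _), show (-1 / 2 + -1 / 2 : ℚ) = -1 by norm_num,
    Ring.choose_neg, add_sub_cancel_left, Ring.choose_natCast, Nat.choose_self]
  simp [Int.negOnePow_def, Units.smul_def]

lemma succ_mul_binomHalf_succ (i : ℕ) :
    (i + 1) * binomHalf (i + 1) = (-1 / 2 - i) * binomHalf i := by
  rw [binomHalf, binomHalf, prod_range_succ, Nat.factorial_succ]
  push_cast
  field_simp

lemma neg_four_pow_mul_binomHalf (i : ℕ) : (-4) ^ i * binomHalf i = Nat.centralBinom i := by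
  induction i with
  | zero => simp [binomHalf]
  | succ i ih =>
    have hcb : ((i + 1 : ℕ) * Nat.centralBinom (i + 1) : ℚ) =
        2 * (2 * i + 1) * Nat.centralBinom i := by
      exact_mod_cast Nat.succ_mul_centralBinom_succ i
    refine mul_left_cancel₀ (Nat.cast_add_one_ne_zero i) ?_
    push_cast at hcb
    rw [hcb, ← ih]
    linear_combination (-4) ^ (i + 1) * succ_mul_binomHalf_succ i

lemma tsum_binomHalf_mul_pow_sq_mul {K : Type*} [NormedField K] [CompleteSpace K] [CharZero K]
    {x : K} (hx : ‖x‖ < 1) (hsum : Summable fun i => ‖(binomHalf i : K) * x ^ i‖) :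
    (∑' i, (binomHalf i : K) * x ^ i) ^ 2 * (1 + x) = 1 := by
  have hx1 : 1 + x ≠ 0 := by
    intro h
    rw [eq_neg_of_add_eq_zero_right h, norm_neg, norm_one] at hx
    exact hx.false
  have hconv (n : ℕ) : ∑ p ∈ antidiagonal n,
      (binomHalf p.1 : K) * x ^ p.1 * ((binomHalf p.2 : K) * x ^ p.2) = (-x) ^ n := by
    calc _ = (∑ p ∈ antidiagonal n, ((binomHalf p.1 * binomHalf p.2 : ℚ) : K)) * x ^ n := by
          rw [sum_mul]
          refine sum_congr rfl fun p hp => ?_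
          rw [← mem_antidiagonal.mp hp, pow_add, Rat.cast_mul]
          ring
      _ = (-x) ^ n := by
          rw [← Rat.cast_sum, sum_antidiagonal_binomHalf_mul, Rat.cast_pow, Rat.cast_neg,
            Rat.cast_one, ← neg_pow]
  rw [sq, tsum_mul_tsum_eq_tsum_sum_antidiagonal_of_summable_norm hsum hsum, tsum_congr hconv,
    tsum_geometric_of_norm_lt_one (by rwa [norm_neg]), sub_neg_eq_add, inv_mul_cancel₀ hx1]

section Ultrametric

variable {K : Type*} [NormedField K] [IsUltrametricDist K]

lemma norm_binomHalf_le_one [CharZero K] (h2 : ‖(2 : K)‖ = 1) (i : ℕ) :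
    ‖(binomHalf i : K)‖ ≤ 1 := by
  have h4 : ‖(-4 : K)‖ = 1 := by
    rw [norm_neg, show (4 : K) = 2 * 2 by norm_num, norm_mul, h2, one_mul]
  calc ‖(binomHalf i : K)‖ = ‖(-4 : K) ^ i * binomHalf i‖ := by
        rw [norm_mul, norm_pow, h4, one_pow, one_mul]
    _ = ‖(Nat.centralBinom i : K)‖ := by
      rw [← Rat.cast_natCast, ← neg_four_pow_mul_binomHalf]; push_cast; rfl
    _ ≤ 1 := IsUltrametricDist.norm_natCast_le_one K _

lemma norm_tsum_sub_sum_range_le_of_norm_le_pow [CompleteSpace K] {f : ℕ → K} {r : ℝ}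
    (hr : 0 ≤ r) (hr1 : r ≤ 1) (hf : ∀ i, ‖f i‖ ≤ r ^ i) (hsum : Summable f) (k : ℕ) :
    ‖∑' i, f i - ∑ i ∈ range k, f i‖ ≤ r ^ k := by
  rw [← hsum.sum_add_tsum_nat_add k, add_sub_cancel_left]
  exact IsUltrametricDist.norm_tsum_le_of_forall_le_of_nonneg (pow_nonneg hr k)
    fun i => (hf _).trans (pow_le_pow_of_le_one hr hr1 (Nat.le_add_left k i))

end Ultrametric

/-- Binomial series for the inverse square root over a complete nonarchimedean normed
field with `‖2‖ = 1`: for `‖x‖ < 1` the series `Σ binom(-1/2,i)·xⁱ` converges to a `y`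
with `y²(1+x) = 1`, and truncating after the `xᵏ` term incurs an error of norm at most
`‖x‖^(k+1)`. -/
theorem inverse_sqrt_binomial_series
    {K : Type*} [NormedField K] [CompleteSpace K] [CharZero K]
    (hna : IsNonarchimedean (fun t : K => ‖t‖))
    (h2 : ‖(2 : K)‖ = 1)
    (x : K) (hx : ‖x‖ < 1) :
    ∃ y : K, HasSum (fun i : ℕ => ((binomHalf i : ℚ) : K) * x ^ i) y ∧
      y ^ 2 * (1 + x) = 1 ∧
      ∀ k : ℕ,
        ‖y - ∑ i ∈ Finset.range (k + 1), ((binomHalf i : ℚ) : K) * x ^ i‖ ≤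
          ‖x‖ ^ (k + 1) := by
  have : IsUltrametricDist K := IsUltrametricDist.isUltrametricDist_of_isNonarchimedean_norm hna
  have hbound (i : ℕ) : ‖(binomHalf i : K) * x ^ i‖ ≤ ‖x‖ ^ i := by
    rw [norm_mul, norm_pow]
    exact mul_le_of_le_one_left (by positivity) (norm_binomHalf_le_one h2 i)
  have hsum : Summable fun i => ‖(binomHalf i : K) * x ^ i‖ :=
    (summable_geometric_of_lt_one (norm_nonneg x) hx).of_nonneg_of_le (fun _ => norm_nonneg _)
      hbound
  exact ⟨_, hsum.of_norm.hasSum, tsum_binomHalf_mul_pow_sq_mul hx hsum,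
    fun k => norm_tsum_sub_sum_range_le_of_norm_le_pow (norm_nonneg x) hx.le hbound hsum.of_norm
      (k + 1)⟩
end

section
/- Let f : Γ → Γ' be a finite morphism of metrised graphs, harmonic with local degrees d : V(Γ) → ℤ, and suppose that f is surjective on vertices and on edges, that every vertex of Γ' is the source of at least one oriented edge, and that Γ' is connected (any two vertices of Γ' are joined by a finite path of oriented edges). Then the quantity Σ_{v : f(v)=v'} d(v) is independent of the vertex v' ∈ V(Γ'); that is, for all vertices v'₁, v'₂ of Γ' one has Σ_{v : f(v)=v'₁} d(v) = Σ_{v : f(v)=v'₂} d(v). -/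
open Finset

/-!
For an edge `e'` of `Γ'`, grouping the edges over `e'` by their source and applying
harmonicity at each vertex over `src e'` gives `Σ_{f(v) = src e'} d(v) = Σ_{f(e) = e'} d_e(f)`.
The right-hand side does not change under `e' ↦ e'⁻¹`, since `d_{e⁻¹}(f) = d_e(f)` (lengths are
invariant under inversion). So the fibre sums agree at the two ends of every edge, and
connectedness of `Γ'` propagates this to all vertices.
-/

theorem MetrisedGraph.inv_involutive {V E : Type} (G : MetrisedGraph V E) :
    Function.Involutive G.inv :=
  G.inv_inv

namespace MetrisedGraph.FiniteMorphism

variable {V E V' E' : Type} {G : MetrisedGraph V E} {G' : MetrisedGraph V' E'}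
  (f : G.FiniteMorphism G')

def edgeFiberDegree [Fintype E] [DecidableEq E'] (e' : E') : ℤ :=
  ∑ e ∈ univ.filter (fun e => f.onE e = e'), f.degE e

def fiberDegree [Fintype V] [DecidableEq V'] (d : V → ℤ) (v' : V') : ℤ :=
  ∑ v ∈ univ.filter (fun v => f.onV v = v'), d v

theorem onE_inv_eq_inv_iff (e : E) (e' : E') :
    f.onE (G.inv e) = G'.inv e' ↔ f.onE e = e' := by
  rw [f.inv_comm]
  exact G'.inv_involutive.injective.eq_iff

theorem edgeFiberDegree_inv [Fintype E] [DecidableEq E'] (e' : E') :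
    f.edgeFiberDegree (G'.inv e') = f.edgeFiberDegree e' := by
  refine sum_equiv G.inv_involutive.toPerm.symm (fun e => ?_) (fun e _ => ?_)
  · simp only [Function.Involutive.coe_toPerm, Function.Involutive.toPerm_symm, mem_filter,
      mem_univ, true_and]
    rw [← f.onE_inv_eq_inv_iff, G'.inv_inv]
  · simp only [Function.Involutive.toPerm_symm, Function.Involutive.coe_toPerm, f.degE_inv]

theorem fiberDegree_src [Fintype V] [Fintype E] [DecidableEq V] [DecidableEq V']
    [DecidableEq E'] {d : V → ℤ} (hharm : f.IsHarmonic d) (e' : E') :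
    f.fiberDegree d (G'.src e') = f.edgeFiberDegree e' := by
  have hmaps : ∀ e ∈ univ.filter (fun e => f.onE e = e'),
      G.src e ∈ univ.filter (fun v => f.onV v = G'.src e') := by
    intro e he
    simp only [mem_filter, mem_univ, true_and] at he ⊢
    rw [f.src_comm, he]
  rw [edgeFiberDegree, ← sum_fiberwise_of_maps_to hmaps]
  refine sum_congr rfl (fun v hv => ?_)
  rw [mem_filter] at hv
  rw [← hharm v e' hv.2.symm, filter_filter]
  simp only [and_comm]

theorem fiberDegree_src_inv [Fintype V] [Fintype E] [DecidableEq V] [DecidableEq V']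
    [DecidableEq E'] {d : V → ℤ} (hharm : f.IsHarmonic d) (e' : E') :
    f.fiberDegree d (G'.src (G'.inv e')) = f.fiberDegree d (G'.src e') := by
  rw [f.fiberDegree_src hharm, f.fiberDegree_src hharm, f.edgeFiberDegree_inv]

end MetrisedGraph.FiniteMorphism

theorem degree_well_defined_general
    {V E V' E' : Type} [Fintype V] [Fintype E]
    [DecidableEq V] [DecidableEq V'] [DecidableEq E']
    (G : MetrisedGraph V E) (G' : MetrisedGraph V' E')
    (f : G.FiniteMorphism G') (d : V → ℤ)
    (hharm : f.IsHarmonic d)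
    (hconn : ∀ v w : V',
      Relation.ReflTransGen
        (fun a b => ∃ e' : E', G'.src e' = a ∧ G'.src (G'.inv e') = b) v w) :
    ∀ v'₁ v'₂ : V',
      ∑ v ∈ Finset.univ.filter (fun v => f.onV v = v'₁), d v =
      ∑ v ∈ Finset.univ.filter (fun v => f.onV v = v'₂), d v := by
  intro v'₁ v'₂
  induction hconn v'₁ v'₂ with
  | refl => rfl
  | tail _ hadj ih =>
    obtain ⟨e', rfl, rfl⟩ := hadj
    exact ih.trans (f.fiberDegree_src_inv hharm e').symm

/-- Well-definedness of the degree of a harmonic morphism: if `f : Γ → Γ'` is a finite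
morphism of metrised graphs, harmonic with local degrees `d`, surjective on vertices
and edges, with every vertex of `Γ'` the source of some edge and `Γ'` connected, then
`Σ_{f(v) = v'} d v` is independent of the vertex `v'` of `Γ'`. -/
theorem degree_well_defined
    {V E V' E' : Type} [Fintype V] [Fintype E] [Fintype V'] [Fintype E']
    [DecidableEq V] [DecidableEq E] [DecidableEq V'] [DecidableEq E']
    (G : MetrisedGraph V E) (G' : MetrisedGraph V' E')
    (f : G.FiniteMorphism G') (d : V → ℤ)
    (hharm : f.IsHarmonic d)
    (hsurjV : Function.Surjective f.onV)
    (hsurjE : Function.Surjective f.onE)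
    (hout : ∀ v' : V', ∃ e' : E', G'.src e' = v')
    (hconn : ∀ v w : V',
      Relation.ReflTransGen
        (fun a b => ∃ e' : E', G'.src e' = a ∧ G'.src (G'.inv e') = b) v w) :
    ∀ v'₁ v'₂ : V',
      ∑ v ∈ Finset.univ.filter (fun v => f.onV v = v'₁), d v =
      ∑ v ∈ Finset.univ.filter (fun v => f.onV v = v'₂), d v :=
  degree_well_defined_general G G' f d hharm hconn
end
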